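/- Let B be a mould in the v-variables that is push_v-invariant (push_v B = B in every depth). Then for every r ≥ 2 the cyclic sum of B equals the shuffle sum of insertions of −v_1 into (v_2−v_1,…,v_r−v_1): Σ_{i=0}^{r−1} (circ^i B)(v_1,…,v_r) = Σ_{i=1}^{r} B(v_2−v_1, …, v_i−v_1, −v_1, v_{i+1}−v_1, …, v_r−v_1), i.e. the left-hand side equals B(sh((−v_1),(v_2−v_1,…,v_r−v_1))). (The identity obtained from (1.2.8)–(1.2.12) in the proof of Theorem 1.2.) -/
import Mathlib


/-!
Moulds over ℚ: a mould is a family `A = (A_r)_{r ≥ 0}` where `A_r` lies in the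
field `ℚ(u_1, …, u_r)` of rational functions in `r` commuting variables,
realized here as the fraction field of `MvPolynomial (Fin r) ℚ`.
Substitution of ℚ-linearly independent linear forms is realized by lifting the
corresponding (injective) polynomial substitution map to the fraction fields.
-/

noncomputable section

/-- The polynomial ring `ℚ[u_1, …, u_r]` (variables are 0-indexed). -/
abbrev MPoly (r : ℕ) : Type := MvPolynomial (Fin r) ℚ

/-- The field of rational functions `ℚ(u_1, …, u_r)`. -/
abbrev MFrac (r : ℕ) : Type := FractionRing (MPoly r)

/-- A mould over ℚ: its depth-`r` part is a rational function of `r` variables;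
its depth-`0` part is a constant. -/
abbrev Mould : Type := (r : ℕ) → MFrac r

/-- The canonical embedding of polynomials into rational functions. -/
def toF {r : ℕ} (p : MPoly r) : MFrac r := algebraMap (MPoly r) (MFrac r) p

/-- The constant `q` viewed as a rational function in `r` variables. -/
def constF (r : ℕ) (q : ℚ) : MFrac r := toF (MvPolynomial.C q)

/-- The variable `u_{k+1}` (0-indexed: `X k`), with junk value `0` out of range. -/
def Xn (r k : ℕ) : MPoly r := if h : k < r then MvPolynomial.X ⟨k, h⟩ else 0

/-- The linear form `u_1 + ⋯ + u_n`. -/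
def sumXn (r n : ℕ) : MPoly r := ∑ k ∈ Finset.range n, Xn r k

/-- Substitution `A(ℓ_1, …, ℓ_s)` of a family of polynomials (in applications:
ℚ-linearly independent linear forms in `u_1, …, u_r`) into a rational function
`A ∈ ℚ(u_1,…,u_s)`, obtained by lifting the polynomial substitution map to the
fraction fields; junk value `0` if the substitution map is not injective
(which never occurs for linearly independent linear forms). -/
def msubst {s r : ℕ} (ℓ : Fin s → MPoly r) (A : MFrac s) : MFrac r := by
  classical
  exact if h : Function.Injective ((algebraMap (MPoly r) (MFrac r)).comp
      (MvPolynomial.aeval (R := ℚ) ℓ).toRingHom)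
    then IsFractionRing.lift h A else 0

/-! ### The basic mould operators -/

/-- Arguments of the swap: `(swap A)(v_1,…,v_r) = A(v_r, v_{r-1}-v_r, …, v_1-v_2)`. -/
def swapArgs (r : ℕ) : Fin r → MPoly r := fun m => Xn r (r - 1 - m.val) - Xn r (r - m.val)

/-- The swap of a mould. -/
def swapM (A : Mould) : Mould := fun r => msubst (swapArgs r) (A r)

/-- `(push_u A)(u_1,…,u_r) = A(−u_1−⋯−u_r, u_1,…,u_{r−1})`. -/
def pushArgs (r : ℕ) : Fin r → MPoly r := fun m =>
  if m.val = 0 then -(sumXn r r) else Xn r (m.val - 1)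

def pushU (A : Mould) : Mould := fun r => msubst (pushArgs r) (A r)

/-- `(push_u⁻¹ A)(u_1,…,u_r) = A(u_2,…,u_r, −u_1−⋯−u_r)`. -/
def pushInvArgs (r : ℕ) : Fin r → MPoly r := fun m =>
  if m.val = r - 1 then -(sumXn r r) else Xn r (m.val + 1)

def pushUInv (A : Mould) : Mould := fun r => msubst (pushInvArgs r) (A r)

/-- `(push_v B)(v_1,…,v_r) = B(−v_r, v_1−v_r, …, v_{r−1}−v_r)`. -/
def pushVArgs (r : ℕ) : Fin r → MPoly r := fun m =>
  if m.val = 0 then -(Xn r (r - 1)) else Xn r (m.val - 1) - Xn r (r - 1)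

def pushV (A : Mould) : Mould := fun r => msubst (pushVArgs r) (A r)

/-- `(push_v⁻¹ B)(v_1,…,v_r) = B(v_2−v_1, …, v_r−v_1, −v_1)`. -/
def pushVInvArgs (r : ℕ) : Fin r → MPoly r := fun m =>
  if m.val = r - 1 then -(Xn r 0) else Xn r (m.val + 1) - Xn r 0

def pushVInv (A : Mould) : Mould := fun r => msubst (pushVInvArgs r) (A r)

/-- `(circ B)(v_1,…,v_r) = B(v_2,…,v_r,v_1)`. -/
def circArgs (r : ℕ) : Fin r → MPoly r := fun m =>
  if m.val = r - 1 then Xn r 0 else Xn r (m.val + 1)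

def circM (A : Mould) : Mould := fun r => msubst (circArgs r) (A r)

/-- `(dur A)(u_1,…,u_r) = (u_1+⋯+u_r)·A(u_1,…,u_r)`. -/
def durM (A : Mould) : Mould := fun r => toF (sumXn r r) * A r

/-- `(dar A)(u_1,…,u_r) = u_1⋯u_r·A(u_1,…,u_r)`. -/
def darM (A : Mould) : Mould := fun r => toF (∏ k ∈ Finset.range r, Xn r k) * A r

/-- `(dar⁻¹ A)(u_1,…,u_r) = A(u_1,…,u_r)/(u_1⋯u_r)`. -/
def darInv (A : Mould) : Mould := fun r => A r / toF (∏ k ∈ Finset.range r, Xn r k)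

/-- `Δ = dar ∘ dur`. -/
def deltaM (A : Mould) : Mould := darM (durM A)

/-- `Δ⁻¹`, dividing the depth-`r` part by `u_1⋯u_r·(u_1+⋯+u_r)`. -/
def deltaInv (A : Mould) : Mould := fun r =>
  A r / toF ((∏ k ∈ Finset.range r, Xn r k) * sumXn r r)

/-! ### The Fay operator -/

/-- Arguments of the `i`-th Fay term (`1 ≤ i ≤ r`):
`(u_2,…,u_i, −ū_i, ū_{i+1}, u_{i+2},…,u_r)` for `i < r`, and
`(u_2,…,u_r, −ū_r)` for `i = r`, where `ū_i = u_1+⋯+u_i`. -/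
def fayArgs (r i : ℕ) : Fin r → MPoly r := fun m =>
  if m.val + 1 < i then Xn r (m.val + 1)
  else if m.val + 1 = i then -(sumXn r i)
  else if m.val = i then sumXn r (i + 1)
  else Xn r m.val

/-- The Fay operator:
`ℱ(B)(u_1,…,u_r) = B(u_1,…,u_r) + B(u_2,…,u_r,−ū_r) + Σ_{i=1}^{r−1} B(u_2,…,u_i,−ū_i,ū_{i+1},u_{i+2},…,u_r)`. -/
def Fay (A : Mould) : Mould := fun r =>
  A r + ∑ i ∈ Finset.Icc 1 r, msubst (fayArgs r i) (A r)

/-! ### Shuffles, alternality, push-invariance and circ-neutrality -/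

/-- Arguments realizing the shuffle of `(u_1,…,u_k)` and `(u_{k+1},…,u_r)` whose
set of positions for the first word is `S` (with `S.card = k`). -/
def shuffleArgs (r : ℕ) (S : Finset (Fin r)) : Fin r → MPoly r := fun m =>
  if m ∈ S then Xn r ((S.filter (fun x => x < m)).card)
  else Xn r (S.card + ((Sᶜ.filter (fun x => x < m)).card))

/-- A mould is alternal if all its shuffle sums
`A(sh((u_1,…,u_k),(u_{k+1},…,u_r)))` for `1 ≤ k ≤ r−1` vanish. -/
def Alternal (A : Mould) : Prop :=
  ∀ r k : ℕ, 1 ≤ k → k < r →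
    ∑ S ∈ Finset.powersetCard k (Finset.univ : Finset (Fin r)),
      msubst (shuffleArgs r S) (A r) = 0

/-- A mould is push-invariant if `push_u A = A` in every depth `r ≥ 1`. -/
def PushInvariant (A : Mould) : Prop := ∀ r : ℕ, 1 ≤ r → pushU A r = A r

/-- Arguments of the `i`-th term (`1 ≤ i ≤ r`) of the shuffle sum
`B(sh((v_1),(v_2,…,v_r)))`, namely `(v_2,…,v_i, v_1, v_{i+1},…,v_r)`. -/
def sh1Args (r i : ℕ) : Fin r → MPoly r := fun m =>
  if m.val + 1 < i then Xn r (m.val + 1)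
  else if m.val + 1 = i then Xn r 0
  else Xn r m.val

/-! ### Mould multiplication, `arat`, and exponentials -/

/-- Arguments `(u_{a+1}, …, u_{a+s})` (a consecutive segment of variables). -/
def segArgs (r a : ℕ) {s : ℕ} : Fin s → MPoly r := fun m => Xn r (a + m.val)

/-- Arguments `(u_1,…,u_{a−1}, u_a+⋯+u_b, u_{b+1},…,u_r)` (the block `u_a…u_b`
merged into a single sum), of length `s = r − (b − a)`. -/
def mergeArgs (r a b : ℕ) {s : ℕ} : Fin s → MPoly r := fun m =>
  if m.val + 1 < a then Xn r m.val
  else if m.val + 1 = a then ∑ k ∈ Finset.Icc (a - 1) (b - 1), Xn r k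
  else Xn r (b + m.val - a)

/-- The mould `arat(M)·Q`. -/
def arat (M Q : Mould) : Mould := fun r =>
  (∑ i ∈ Finset.Icc 1 (r - 1), ∑ j ∈ Finset.Icc (i + 1) (r - 1),
      msubst (segArgs r i) (M (j - i)) *
        (msubst (mergeArgs r i j) (Q (r - (j - i))) -
          msubst (mergeArgs r (i + 1) (j + 1)) (Q (r - (j - i)))))
  + (∑ i ∈ Finset.Icc 1 (r - 1),
      msubst (segArgs r 0) (M i) *
        (msubst (segArgs r i) (Q (r - i)) - msubst (mergeArgs r 1 (i + 1)) (Q (r - i))))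
  + (∑ i ∈ Finset.Icc 1 (r - 1),
      msubst (segArgs r i) (M (r - i)) *
        (msubst (mergeArgs r i r) (Q i) - msubst (segArgs r 0) (Q i)))

/-- Mould multiplication `mu(A,B)(u_1,…,u_r) = Σ_i A(u_1,…,u_i)B(u_{i+1},…,u_r)`. -/
def muM (A B : Mould) : Mould := fun r =>
  ∑ i ∈ Finset.range (r + 1), msubst (segArgs r 0) (A i) * msubst (segArgs r i) (B (r - i))

/-- The unit mould for `mu`. -/
def oneMould : Mould := fun r => if r = 0 then 1 else 0

/-- `mu`-powers of a mould. -/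
def muPow (Q : Mould) : ℕ → Mould
  | 0 => oneMould
  | n + 1 => muM (muPow Q n) Q

/-- `exp_mu(Q) = Σ_{n≥0} Q^{·n}/n!`; for `Q ∈ ARI` this is a finite sum in each
depth, since `Q^{·n}` vanishes in depths `< n`. -/
def expMu (Q : Mould) : Mould := fun r =>
  ∑ n ∈ Finset.range (r + 1), constF r (1 / (n.factorial : ℚ)) * muPow Q n r

/-- Arguments `(v_2−v_1, …, v_i−v_1, −v_1, v_{i+1}−v_1, …, v_r−v_1)`: the
insertion of `−v_1` at (1-indexed) position `i` into `(v_2−v_1,…,v_r−v_1)`. -/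
def insArgs (r i : ℕ) : Fin r → MPoly r := fun m =>
  if m.val + 1 < i then Xn r (m.val + 1) - Xn r 0
  else if m.val + 1 = i then -(Xn r 0)
  else Xn r m.val - Xn r 0


/-! ### Auxiliary machinery for the proof -/

open MvPolynomial in
lemma aeval_comp_eq {r : ℕ} (ℓ m : Fin r → MPoly r) (p : MPoly r) :
    aeval ℓ (aeval m p) = aeval (fun k => aeval ℓ (m k)) p := by
  rw [← AlgHom.comp_apply]; congr 1
  apply algHom_ext; intro k; simp

open MvPolynomial in
lemma aeval_comp_inj {r : ℕ} {ℓ m : Fin r → MPoly r}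
    (hℓ : Function.Injective (aeval (R := ℚ) ℓ : MPoly r → MPoly r))
    (hm : Function.Injective (aeval (R := ℚ) m : MPoly r → MPoly r)) :
    Function.Injective (aeval (R := ℚ) (fun k => aeval ℓ (m k)) : MPoly r → MPoly r) := by
  have h : (aeval (R := ℚ) (fun k => aeval ℓ (m k)) : MPoly r → MPoly r)
      = (aeval (R := ℚ) ℓ : MPoly r → MPoly r) ∘ (aeval (R := ℚ) m) := by
    funext p
    simp only [Function.comp_apply]
    exact (aeval_comp_eq ℓ m p).symm
  rw [h]; exact hℓ.comp hm

open MvPolynomial in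
lemma aeval_inj_of_inv {r : ℕ} {ℓ m : Fin r → MPoly r}
    (h : ∀ k, aeval m (ℓ k) = X k) :
    Function.Injective (aeval (R := ℚ) ℓ : MPoly r → MPoly r) := by
  intro p q hpq
  have key : ∀ p : MPoly r, aeval m (aeval ℓ p) = p := by
    intro p; rw [aeval_comp_eq]; simp_rw [h]
    exact aeval_X_left_apply p
  rw [← key p, ← key q, hpq]

open MvPolynomial in
lemma hom_inj {r : ℕ} {ℓ : Fin r → MPoly r}
    (h : Function.Injective (aeval (R := ℚ) ℓ : MPoly r → MPoly r)) :
    Function.Injective ((algebraMap (MPoly r) (MFrac r)).comp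
      (MvPolynomial.aeval (R := ℚ) ℓ).toRingHom) := by
  rw [RingHom.coe_comp]
  exact (IsFractionRing.injective (MPoly r) (MFrac r)).comp h

open MvPolynomial in
set_option maxHeartbeats 2000000 in
lemma msubst_msubst {r : ℕ} (ℓ m : Fin r → MPoly r)
    (hℓ : Function.Injective (aeval (R := ℚ) ℓ : MPoly r → MPoly r))
    (hm : Function.Injective (aeval (R := ℚ) m : MPoly r → MPoly r)) (A : MFrac r) :
    msubst ℓ (msubst m A) = msubst (fun k => aeval ℓ (m k)) A := by
  have hc := aeval_comp_inj hℓ hm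
  unfold msubst
  rw [dif_pos (hom_inj hℓ), dif_pos (hom_inj hm), dif_pos (hom_inj hc)]
  rw [← RingHom.comp_apply]
  congr 1
  apply IsLocalization.ringHom_ext (nonZeroDivisors (MPoly r))
  refine RingHom.ext fun p => ?_
  rw [RingHom.comp_apply, RingHom.comp_apply, RingHom.comp_apply,
    IsFractionRing.lift_algebraMap (hom_inj hm) p,
    RingHom.comp_apply,
    IsFractionRing.lift_algebraMap (hom_inj hℓ), IsFractionRing.lift_algebraMap (hom_inj hc) p,
    RingHom.comp_apply, RingHom.comp_apply]
  simp only [AlgHom.toRingHom_eq_coe, RingHom.coe_coe]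
  rw [aeval_comp_eq]

open MvPolynomial in
set_option maxHeartbeats 2000000 in
lemma msubst_id {r : ℕ} (ℓ : Fin r → MPoly r) (h : ∀ k, ℓ k = X k) (A : MFrac r) :
    msubst ℓ A = A := by
  have hinj : Function.Injective (aeval (R := ℚ) ℓ : MPoly r → MPoly r) :=
    aeval_inj_of_inv (m := ℓ) (fun k => by rw [h k]; simp [h])
  unfold msubst
  rw [dif_pos (hom_inj hinj)]
  have heq : IsFractionRing.lift (hom_inj hinj) = RingHom.id (MFrac r) := by
    apply IsLocalization.ringHom_ext (nonZeroDivisors (MPoly r))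
    refine RingHom.ext fun p => ?_
    rw [RingHom.comp_apply, RingHom.comp_apply,
      IsFractionRing.lift_algebraMap (hom_inj hinj) p, RingHom.comp_apply, RingHom.id_apply]
    congr 1
    simp only [AlgHom.toRingHom_eq_coe, RingHom.coe_coe]
    have hfn : ℓ = fun k => X k := funext h
    rw [hfn]
    exact aeval_X_left_apply p
  rw [heq]; rfl

open MvPolynomial in
lemma aeval_Xn {r : ℕ} (ℓ : Fin r → MPoly r) (k : ℕ) (h : k < r) :
    aeval ℓ (Xn r k) = ℓ ⟨k, h⟩ := by simp [Xn, h]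

open MvPolynomial in
lemma Xn_eq {r k : ℕ} (h : k < r) : Xn r k = X ⟨k, h⟩ := by simp [Xn, h]

lemma pVI_at {r : ℕ} (j : ℕ) (h : j < r) :
    pushVInvArgs r ⟨j, h⟩ = if j = r - 1 then -(Xn r 0) else Xn r (j + 1) - Xn r 0 := rfl
lemma pV_at {r : ℕ} (j : ℕ) (h : j < r) :
    pushVArgs r ⟨j, h⟩ = if j = 0 then -(Xn r (r - 1)) else Xn r (j - 1) - Xn r (r - 1) := rfl
lemma circ_at {r : ℕ} (j : ℕ) (h : j < r) :
    circArgs r ⟨j, h⟩ = if j = r - 1 then Xn r 0 else Xn r (j + 1) := rfl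
lemma ins_at {r i : ℕ} (j : ℕ) (h : j < r) :
    insArgs r i ⟨j, h⟩ = if j + 1 < i then Xn r (j + 1) - Xn r 0
      else if j + 1 = i then -(Xn r 0) else Xn r j - Xn r 0 := rfl
lemma fin_eq {r : ℕ} (a : ℕ) (h : a < r) (k : Fin r) (hv : a = k.val) :
    (⟨a, h⟩ : Fin r) = k := Fin.ext hv

open MvPolynomial in
lemma I1 (r : ℕ) (hr : 2 ≤ r) (k : Fin r) :
    aeval (pushVInvArgs r) (pushVArgs r k) = X k := by
  have hk := k.isLt
  rw [show pushVArgs r k = pushVArgs r ⟨k.val, hk⟩ from rfl, pV_at]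
  by_cases h0 : (k : ℕ) = 0
  · rw [if_pos h0, map_neg, aeval_Xn _ _ (by omega : r - 1 < r), pVI_at, if_pos rfl, neg_neg,
      Xn_eq (by omega : 0 < r), fin_eq 0 (by omega) k (by omega)]
  · rw [if_neg h0, map_sub, aeval_Xn _ _ (by omega : (k:ℕ) - 1 < r),
      aeval_Xn _ _ (by omega : r - 1 < r), pVI_at, pVI_at, if_pos rfl,
      if_neg (by omega : ¬((k:ℕ) - 1 = r - 1)), Xn_eq (by omega : (k:ℕ) - 1 + 1 < r),
      Xn_eq (by omega : 0 < r), fin_eq ((k:ℕ) - 1 + 1) (by omega) k (by omega)]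
    ring

open MvPolynomial in
lemma I2 (r : ℕ) (hr : 2 ≤ r) (k : Fin r) :
    aeval (pushVArgs r) (pushVInvArgs r k) = X k := by
  have hk := k.isLt
  rw [show pushVInvArgs r k = pushVInvArgs r ⟨k.val, hk⟩ from rfl, pVI_at]
  by_cases h0 : (k : ℕ) = r - 1
  · rw [if_pos h0, map_neg, aeval_Xn _ _ (by omega : 0 < r), pV_at, if_pos rfl, neg_neg,
      Xn_eq (by omega : r - 1 < r), fin_eq (r-1) (by omega) k (by omega)]
  · rw [if_neg h0, map_sub, aeval_Xn _ _ (by omega : (k:ℕ) + 1 < r),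
      aeval_Xn _ _ (by omega : 0 < r), pV_at, pV_at, if_pos rfl,
      if_neg (by omega : ¬((k:ℕ) + 1 = 0)), Xn_eq (by omega : (k:ℕ) + 1 - 1 < r),
      fin_eq ((k:ℕ) + 1 - 1) (by omega) k (by omega), Xn_eq (by omega : r - 1 < r)]
    ring

def circInvArgs (r : ℕ) : Fin r → MPoly r := fun m =>
  if m.val = 0 then Xn r (r - 1) else Xn r (m.val - 1)
lemma cInv_at {r : ℕ} (j : ℕ) (h : j < r) :
    circInvArgs r ⟨j, h⟩ = if j = 0 then Xn r (r - 1) else Xn r (j - 1) := rfl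

open MvPolynomial in
lemma I3 (r : ℕ) (hr : 2 ≤ r) (k : Fin r) :
    aeval (circInvArgs r) (circArgs r k) = X k := by
  have hk := k.isLt
  rw [show circArgs r k = circArgs r ⟨k.val, hk⟩ from rfl, circ_at]
  by_cases h0 : (k : ℕ) = r - 1
  · rw [if_pos h0, aeval_Xn _ _ (by omega : 0 < r), cInv_at, if_pos rfl,
      Xn_eq (by omega : r - 1 < r), fin_eq (r-1) (by omega) k (by omega)]
  · rw [if_neg h0, aeval_Xn _ _ (by omega : (k:ℕ) + 1 < r), cInv_at,
      if_neg (by omega : ¬((k:ℕ) + 1 = 0)), Xn_eq (by omega : (k:ℕ) + 1 - 1 < r),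
      fin_eq ((k:ℕ) + 1 - 1) (by omega) k (by omega)]

def insInvArgs (r i : ℕ) : Fin r → MPoly r := fun m =>
  if m.val = 0 then -(Xn r (i - 1))
  else if m.val < i then Xn r (m.val - 1) - Xn r (i - 1)
  else Xn r m.val - Xn r (i - 1)
lemma insInv_at {r i : ℕ} (j : ℕ) (h : j < r) :
    insInvArgs r i ⟨j, h⟩ = if j = 0 then -(Xn r (i - 1))
      else if j < i then Xn r (j - 1) - Xn r (i - 1) else Xn r j - Xn r (i - 1) := rfl

open MvPolynomial in
lemma I4 (r i : ℕ) (hr : 2 ≤ r) (hi1 : 1 ≤ i) (hir : i ≤ r) (k : Fin r) :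
    aeval (insInvArgs r i) (insArgs r i k) = X k := by
  have hk := k.isLt
  rw [show insArgs r i k = insArgs r i ⟨k.val, hk⟩ from rfl, ins_at]
  rcases lt_trichotomy ((k:ℕ) + 1) i with h | h | h
  · rw [if_pos h, map_sub, aeval_Xn _ _ (by omega : (k:ℕ) + 1 < r),
      aeval_Xn _ _ (by omega : 0 < r), insInv_at, insInv_at, if_pos rfl,
      if_neg (by omega : ¬((k:ℕ) + 1 = 0)), if_pos (by omega : (k:ℕ) + 1 < i),
      Xn_eq (by omega : (k:ℕ) + 1 - 1 < r), fin_eq ((k:ℕ)+1-1) (by omega) k (by omega),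
      Xn_eq (by omega : i - 1 < r)]
    ring
  · rw [if_neg (by omega), if_pos h, map_neg, aeval_Xn _ _ (by omega : 0 < r), insInv_at,
      if_pos rfl, neg_neg, Xn_eq (by omega : i - 1 < r), fin_eq (i-1) (by omega) k (by omega)]
  · rw [if_neg (by omega), if_neg (by omega), map_sub,
      aeval_Xn _ _ (by omega : (k:ℕ) < r), aeval_Xn _ _ (by omega : 0 < r),
      insInv_at, insInv_at, if_pos rfl, if_neg (by omega : ¬((k:ℕ) = 0)),
      if_neg (by omega : ¬((k:ℕ) < i)), Xn_eq (by omega : (k:ℕ) < r),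
      fin_eq (k:ℕ) (by omega) k (by omega), Xn_eq (by omega : i - 1 < r)]
    ring

open MvPolynomial in
lemma C1 (r : ℕ) (hr : 2 ≤ r) (k : Fin r) :
    aeval (circArgs r) (pushVArgs r k) = insArgs r 1 k := by
  have hk := k.isLt
  rw [show pushVArgs r k = pushVArgs r ⟨k.val, hk⟩ from rfl, pV_at,
    show insArgs r 1 k = insArgs r 1 ⟨k.val, hk⟩ from rfl, ins_at]
  by_cases h0 : (k : ℕ) = 0
  · rw [if_pos h0, map_neg, aeval_Xn _ _ (by omega : r - 1 < r), circ_at, if_pos rfl,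
      if_neg (by omega), if_pos (by omega : (k:ℕ) + 1 = 1)]
  · rw [if_neg h0, map_sub, aeval_Xn _ _ (by omega : (k:ℕ) - 1 < r),
      aeval_Xn _ _ (by omega : r - 1 < r), circ_at, circ_at, if_pos rfl,
      if_neg (by omega : ¬((k:ℕ) - 1 = r - 1)), if_neg (by omega : ¬((k:ℕ) + 1 < 1)),
      if_neg (by omega : ¬((k:ℕ) + 1 = 1)),
      show (k:ℕ) - 1 + 1 = (k:ℕ) from by omega]

open MvPolynomial in
lemma C2 (r i : ℕ) (hr : 2 ≤ r) (hi1 : 1 ≤ i) (hir : i + 1 ≤ r - 1) (k : Fin r) :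
    aeval (circArgs r) (aeval (insArgs r i) (pushVArgs r k)) = insArgs r (i + 1) k := by
  have hk := k.isLt
  rw [show pushVArgs r k = pushVArgs r ⟨k.val, hk⟩ from rfl, pV_at,
    show insArgs r (i+1) k = insArgs r (i+1) ⟨k.val, hk⟩ from rfl, ins_at]
  by_cases h0 : (k : ℕ) = 0
  · rw [if_pos h0, map_neg, aeval_Xn _ _ (by omega : r - 1 < r), ins_at,
      if_neg (by omega : ¬(r - 1 + 1 < i)), if_neg (by omega : ¬(r - 1 + 1 = i)),
      map_neg, map_sub, aeval_Xn _ _ (by omega : r - 1 < r), aeval_Xn _ _ (by omega : 0 < r),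
      circ_at, circ_at, if_pos rfl, if_neg (by omega : ¬(0 = r - 1)),
      if_pos (by omega : (k:ℕ) + 1 < i + 1), Xn_eq (by omega : 0 < r),
      Xn_eq (by omega : 0 + 1 < r), Xn_eq (by omega : (k:ℕ) + 1 < r),
      fin_eq ((k:ℕ)+1) (by omega) ⟨0+1, by omega⟩ (by simp [h0])]
    ring
  · rw [if_neg h0, map_sub, aeval_Xn _ _ (by omega : (k:ℕ) - 1 < r),
      aeval_Xn _ _ (by omega : r - 1 < r), ins_at, ins_at,
      if_neg (by omega : ¬(r - 1 + 1 < i)), if_neg (by omega : ¬(r - 1 + 1 = i))]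
    rcases lt_trichotomy (k:ℕ) i with h | h | h
    · rw [if_pos (by omega : (k:ℕ) - 1 + 1 < i), map_sub, map_sub, map_sub,
        aeval_Xn _ _ (by omega : (k:ℕ) - 1 + 1 < r), aeval_Xn _ _ (by omega : 0 < r),
        aeval_Xn _ _ (by omega : r - 1 < r), circ_at, circ_at, circ_at, if_pos rfl,
        if_neg (by omega : ¬(0 = r - 1)), if_neg (by omega : ¬((k:ℕ) - 1 + 1 = r - 1)),
        if_pos (by omega : (k:ℕ) + 1 < i + 1),
        show (k:ℕ) - 1 + 1 + 1 = (k:ℕ) + 1 from by omega,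
        Xn_eq (by omega : (k:ℕ) + 1 < r), Xn_eq (by omega : 0 < r),
        Xn_eq (by omega : 0 + 1 < r)]
      ring
    · rw [if_neg (by omega : ¬((k:ℕ) - 1 + 1 < i)), if_pos (by omega : (k:ℕ) - 1 + 1 = i),
        map_sub, map_neg, map_sub, aeval_Xn _ _ (by omega : 0 < r),
        aeval_Xn _ _ (by omega : r - 1 < r), circ_at, circ_at, if_pos rfl,
        if_neg (by omega : ¬(0 = r - 1)), if_neg (by omega : ¬((k:ℕ) + 1 < i + 1)),
        if_pos (by omega : (k:ℕ) + 1 = i + 1), Xn_eq (by omega : 0 < r),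
        Xn_eq (by omega : 0 + 1 < r)]
      ring
    · rw [if_neg (by omega : ¬((k:ℕ) - 1 + 1 < i)), if_neg (by omega : ¬((k:ℕ) - 1 + 1 = i)),
        map_sub, map_sub, map_sub, aeval_Xn _ _ (by omega : (k:ℕ) - 1 < r),
        aeval_Xn _ _ (by omega : 0 < r), aeval_Xn _ _ (by omega : r - 1 < r),
        circ_at, circ_at, circ_at, if_pos rfl, if_neg (by omega : ¬(0 = r - 1)),
        if_neg (by omega : ¬((k:ℕ) - 1 = r - 1)),
        if_neg (by omega : ¬((k:ℕ) + 1 < i + 1)), if_neg (by omega : ¬((k:ℕ) + 1 = i + 1)),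
        show (k:ℕ) - 1 + 1 = (k:ℕ) from by omega,
        Xn_eq (by omega : (k:ℕ) < r), Xn_eq (by omega : 0 < r),
        Xn_eq (by omega : 0 + 1 < r)]
      ring

/-- **(1.2.8)–(1.2.12).** Let `B` be a mould in the `v`-variables that is
`push_v`-invariant.  Then for every `r ≥ 2` the cyclic sum of `B` equals the
shuffle sum of insertions of `−v_1` into `(v_2−v_1,…,v_r−v_1)`:
`Σ_{i=0}^{r−1} (circ^i B)(v_1,…,v_r)
  = Σ_{i=1}^{r} B(v_2−v_1,…,v_i−v_1,−v_1,v_{i+1}−v_1,…,v_r−v_1)`. -/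
theorem circ_sum_eq_shuffle (B : Mould)
    (hpush : ∀ r : ℕ, 1 ≤ r → pushV B r = B r) :
    ∀ r : ℕ, 2 ≤ r →
      ∑ i ∈ Finset.range r, (circM^[i] B) r
        = ∑ i ∈ Finset.Icc 1 r, msubst (insArgs r i) (B r) := by
  intro r hr
  classical
  have hpV : Function.Injective
      (MvPolynomial.aeval (R := ℚ) (pushVArgs r) : MPoly r → MPoly r) :=
    aeval_inj_of_inv (m := pushVInvArgs r) (I1 r hr)
  have hpVI : Function.Injective
      (MvPolynomial.aeval (R := ℚ) (pushVInvArgs r) : MPoly r → MPoly r) :=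
    aeval_inj_of_inv (m := pushVArgs r) (I2 r hr)
  have hcirc : Function.Injective
      (MvPolynomial.aeval (R := ℚ) (circArgs r) : MPoly r → MPoly r) :=
    aeval_inj_of_inv (m := circInvArgs r) (I3 r hr)
  have hins : ∀ i, 1 ≤ i → i ≤ r → Function.Injective
      (MvPolynomial.aeval (R := ℚ) (insArgs r i) : MPoly r → MPoly r) :=
    fun i h1 h2 => aeval_inj_of_inv (m := insInvArgs r i) (I4 r i hr h1 h2)
  have hBpush : msubst (pushVArgs r) (B r) = B r := hpush r (by omega)
  have key0 : B r = msubst (insArgs r r) (B r) := by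
    have h1 : msubst (pushVInvArgs r) (B r) = B r := by
      conv_lhs => rw [← hBpush]
      rw [msubst_msubst _ _ hpVI hpV]
      exact msubst_id _ (I1 r hr) _
    have h2 : insArgs r r = pushVInvArgs r := by
      funext m
      have hm := m.isLt
      simp only [insArgs, pushVInvArgs]
      split_ifs <;> first | rfl | omega
    rw [h2, h1]
  have key : ∀ i, 1 ≤ i → i ≤ r - 1 → (circM^[i] B) r = msubst (insArgs r i) (B r) := by
    intro i
    induction i with
    | zero => intro h; omega
    | succ n ih =>
      intro _ hle
      rcases Nat.eq_zero_or_pos n with h0 | hpos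
      · subst h0
        rw [Function.iterate_one]
        show msubst (circArgs r) (B r) = _
        conv_lhs => rw [← hBpush]
        rw [msubst_msubst _ _ hcirc hpV]
        congr 1
        funext k
        exact C1 r hr k
      · have hih := ih hpos (by omega)
        rw [Function.iterate_succ_apply']
        show msubst (circArgs r) ((circM^[n] B) r) = _
        rw [hih]
        conv_lhs => rw [← hBpush]
        rw [msubst_msubst (insArgs r n) (pushVArgs r) (hins n hpos (by omega)) hpV,
          msubst_msubst (circArgs r) _ hcirc (aeval_comp_inj (hins n hpos (by omega)) hpV)]
        congr 1
        funext k
        show MvPolynomial.aeval (circArgs r)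
            (MvPolynomial.aeval (insArgs r n) (pushVArgs r k)) = insArgs r (n + 1) k
        exact C2 r n hr hpos (by omega) k
  have hsum : ∑ i ∈ Finset.range r, (circM^[i] B) r
      = (∑ i ∈ Finset.range (r - 1), msubst (insArgs r (i + 1)) (B r))
        + msubst (insArgs r r) (B r) := by
    obtain ⟨s, rfl⟩ : ∃ s, r = s + 1 := ⟨r - 1, by omega⟩
    rw [Finset.sum_range_succ']
    have h0' : (circM^[0] B) (s + 1) = msubst (insArgs (s + 1) (s + 1)) (B (s + 1)) := by
      rw [Function.iterate_zero_apply]; exact key0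
    rw [h0', Nat.add_sub_cancel]
    congr 1
    refine Finset.sum_congr rfl fun i hi => ?_
    simp only [Finset.mem_range] at hi
    exact key (i + 1) (by omega) (by omega)
  rw [hsum]
  rw [show Finset.Icc 1 r = Finset.Ico 1 (r + 1) from by rw [Finset.Ico_add_one_right_eq_Icc],
    Finset.sum_Ico_succ_top (by omega), Finset.sum_Ico_eq_sum_range]
  congr 1
  refine Finset.sum_congr rfl fun i hi => ?_
  rw [Nat.add_comm 1 i]

end
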